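/- arXiv:2102.12733 — 2 statements merged into one kernel-verified Lean document; each statement's English description precedes it below -/
import Mathlib

section
/- Work in a real inner product space H. Fix reals ρ > 0 and η > 0. Let θ̂_t, θ̂_{t+1}, γ̂_t, γ̂_{t+1}, λ̂_t, λ̂_{t+1}, θ⋆ ∈ H and let L : H → ℝ be convex and differentiable at both θ̂_t and θ̂_{t+1}, satisfying the per-step relations (R1) ∇L(θ̂_{t+1}) = −λ̂_{t+1} − ρ·(γ̂_{t+1} − γ̂_t) − η·(θ̂_{t+1} − θ̂_t); (R2) λ̂_{t+1} = λ̂_t + ρ·(θ̂_{t+1} − γ̂_{t+1}); (R3) ⟨λ̂_{t+1}, θ⋆ − γ̂_{t+1}⟩ ≤ 0. Then L(θ̂_t) − L(θ⋆) ≤ (1/(2ρ))·(‖λ̂_t‖² − ‖λ̂_{t+1}‖²) + (1/(2η))·‖∇L(θ̂_t)‖² + (ρ/2)·(‖γ̂_t − θ⋆‖² − ‖γ̂_{t+1} − θ⋆‖²) + (η/2)·(‖θ̂_t − θ⋆‖² − ‖θ̂_{t+1} − θ⋆‖²). -/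
/-!
Convexity at `θt` and at `θt1` bounds `L θt - L θs` by `⟪g, θt - θt1⟫ + ⟪∇L θt1, θt1 - θs⟫`.
After substituting (R1), Young's inequality trades `⟪g, θt - θt1⟫` for `‖g‖² / (2η)` plus exactly
the `‖θt1 - θt‖²` that the three-point identity leaves over from the `η`-term. Writing
`θt1 - γt1 = (lamt1 - lamt) / ρ`, the multiplier and consensus terms telescope in the same way up
to `-(ρ/2) ‖θt1 - γt‖²` and `⟪lamt1, θs - γt1⟫`, both nonpositive.
-/

open scoped InnerProductSpace

theorem ConvexOn.add_fderiv_sub_le {E : Type*} [NormedAddCommGroup E] [NormedSpace ℝ E]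
    {S : Set E} {f : E → ℝ} {f' : E →L[ℝ] ℝ} {x y : E} (hf : ConvexOn ℝ S f)
    (hx : x ∈ S) (hy : y ∈ S) (hderiv : HasFDerivAt f f' x) :
    f x + f' (y - x) ≤ f y := by
  let A : ℝ →ᵃ[ℝ] E := AffineMap.lineMap x y
  have hA : HasDerivAt A (y - x) 0 := by
    simpa [A] using AffineMap.hasDerivAt_lineMap (a := x) (b := y) (x := 0)
  have hslope := (hf.comp_affineMap A).le_slope_of_hasDerivAt
    (by simpa [A] using hx) (by simpa [A] using hy) zero_lt_one
    ((by simpa [A] using hderiv : HasFDerivAt f f' (A 0)).comp_hasDerivAt 0 hA)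
  simp only [A, Function.comp_apply, AffineMap.lineMap_apply_zero, AffineMap.lineMap_apply_one,
    slope_def_field, sub_zero, div_one] at hslope
  linarith

section InnerProduct

variable {F : Type*} [NormedAddCommGroup F] [InnerProductSpace ℝ F]

theorem ConvexOn.add_inner_gradient_sub_le [CompleteSpace F] {S : Set F} {f : F → ℝ}
    {g x y : F} (hf : ConvexOn ℝ S f) (hx : x ∈ S) (hy : y ∈ S) (hg : HasGradientAt f g x) :
    f x + ⟪g, y - x⟫_ℝ ≤ f y :=
  hf.add_fderiv_sub_le hx hy hg.hasFDerivAt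

theorem real_inner_sub_sub_three_point (a b c : F) :
    2 * ⟪a - b, a - c⟫_ℝ = ‖a - b‖ ^ 2 + ‖a - c‖ ^ 2 - ‖b - c‖ ^ 2 := by
  rw [show b - c = (a - c) - (a - b) by abel, norm_sub_sq_real (a - c) (a - b), real_inner_comm]
  ring

theorem real_inner_le_div_add_mul {η : ℝ} (hη : 0 < η) (u v : F) :
    ⟪u, v⟫_ℝ ≤ 1 / (2 * η) * ‖u‖ ^ 2 + η / 2 * ‖v‖ ^ 2 := by
  have h := norm_sub_sq_real u (η • v)
  rw [real_inner_smul_right, norm_smul, Real.norm_of_nonneg hη.le] at h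
  field_simp
  linear_combination sq_nonneg ‖u - η • v‖ + h

theorem admm_dual_step_le {ρ : ℝ} (hρ : 0 < ρ) {θ' γ γ' lam lam' θs : F}
    (hupdate : lam' = lam + ρ • (θ' - γ')) (hproj : ⟪lam', θs - γ'⟫_ℝ ≤ 0) :
    ⟪-lam' - ρ • (γ' - γ), θ' - θs⟫_ℝ ≤
      1 / (2 * ρ) * (‖lam‖ ^ 2 - ‖lam'‖ ^ 2) + ρ / 2 * (‖γ - θs‖ ^ 2 - ‖γ' - θs‖ ^ 2) := by
  have hlam : lam = lam' - ρ • (θ' - γ') := by rw [hupdate]; abel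
  have hmult : 1 / (2 * ρ) * (‖lam‖ ^ 2 - ‖lam'‖ ^ 2) =
      -⟪lam', θ' - γ'⟫_ℝ + ρ / 2 * ‖θ' - γ'‖ ^ 2 := by
    rw [hlam, norm_sub_sq_real, real_inner_smul_right, norm_smul, Real.norm_of_nonneg hρ.le]
    field_simp
    ring
  have hcons := real_inner_sub_sub_three_point γ' γ θs
  have hsum := norm_add_sq_real (θ' - γ') (γ' - γ)
  have hsplit : θ' - θs = (θ' - γ') + (γ' - θs) := by abel
  rw [show θs - γ' = -(γ' - θs) by abel, inner_neg_right] at hproj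
  rw [hmult, hsplit, inner_add_right, inner_sub_left, inner_sub_left, real_inner_smul_left,
    real_inner_smul_left, inner_neg_left, inner_neg_left, real_inner_comm (θ' - γ') (γ' - γ)]
  linear_combination hproj + ρ / 2 * hsum - ρ / 2 * hcons + ρ / 2 * sq_nonneg ‖θ' - γ' + (γ' - γ)‖

theorem proximal_step_le {η : ℝ} (hη : 0 < η) (g θ θ' θs : F) :
    ⟪g, θ - θ'⟫_ℝ - η * ⟪θ' - θ, θ' - θs⟫_ℝ ≤
      1 / (2 * η) * ‖g‖ ^ 2 + η / 2 * (‖θ - θs‖ ^ 2 - ‖θ' - θs‖ ^ 2) := by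
  have hyoung := real_inner_le_div_add_mul hη g (θ - θ')
  have hthree := real_inner_sub_sub_three_point θ' θ θs
  rw [norm_sub_rev θ θ'] at hyoung
  linear_combination hyoung - η / 2 * hthree

end InnerProduct

/-- Per-step regret inequality: Lemma 2 combined with convexity and Fenchel–Young. -/
theorem domkl_per_step_regret
    {H : Type*} [NormedAddCommGroup H] [InnerProductSpace ℝ H] [CompleteSpace H]
    (ρ η : ℝ) (hρ : 0 < ρ) (hη : 0 < η)
    (θt θt1 γt γt1 lamt lamt1 θs : H) (L : H → ℝ) (g : H)
    (hconv : ConvexOn ℝ Set.univ L)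
    (hgradt : HasGradientAt L g θt)
    (hgradt1 : HasGradientAt L (-lamt1 - ρ • (γt1 - γt) - η • (θt1 - θt)) θt1)
    (hR2 : lamt1 = lamt + ρ • (θt1 - γt1))
    (hR3 : ⟪lamt1, θs - γt1⟫_ℝ ≤ 0) :
    L θt - L θs ≤
      (1 / (2 * ρ)) * (‖lamt‖ ^ 2 - ‖lamt1‖ ^ 2)
        + (1 / (2 * η)) * ‖g‖ ^ 2
        + (ρ / 2) * (‖γt - θs‖ ^ 2 - ‖γt1 - θs‖ ^ 2)
        + (η / 2) * (‖θt - θs‖ ^ 2 - ‖θt1 - θs‖ ^ 2) := by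
  have hstep := hconv.add_inner_gradient_sub_le (Set.mem_univ _) (Set.mem_univ θt1) hgradt
  have hopt := hconv.add_inner_gradient_sub_le (Set.mem_univ _) (Set.mem_univ θs) hgradt1
  rw [← neg_sub θt θt1, inner_neg_right] at hstep
  rw [← neg_sub θt1 θs, inner_neg_right, inner_sub_left, real_inner_smul_left] at hopt
  have hdual := admm_dual_step_le hρ (γ := γt) hR2 hR3
  have hprox := proximal_step_le hη g θt θt1 θs
  linarith
end

section
/- (Theorem 1, consensus-violation part, with parameter choice ρ = η = √T) Work in a real inner product space H. Fix an integer T ≥ 1 and reals C ≥ 0, B ≥ 0, and set ρ = η = √T. Let L_1, …, L_T : H → ℝ, θ̂_1, …, θ̂_{T+1}, γ̂_1, …, γ̂_{T+1}, λ̂_1, …, λ̂_{T+1} ∈ H and θ⋆ ∈ H satisfy, for every t ∈ {1, …, T}: L_t is convex and differentiable at θ̂_{t+1}; the per-step relations (R1) ∇L_t(θ̂_{t+1}) = −λ̂_{t+1} − ρ·(γ̂_{t+1} − γ̂_t) − η·(θ̂_{t+1} − θ̂_t), (R2) λ̂_{t+1} = λ̂_t + ρ·(θ̂_{t+1} − γ̂_{t+1}),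 (R3) ⟨λ̂_{t+1}, θ⋆ − γ̂_{t+1}⟩ ≤ 0; and L_t(θ̂_{t+1}) − L_t(θ⋆) ≥ −B. Assume λ̂_1 = 0, ‖γ̂_1 − θ⋆‖² ≤ C, and ‖θ̂_1 − θ⋆‖² ≤ C. Then Σ_{t=1}^{T} ‖θ̂_{t+1} − γ̂_t‖² ≤ 2·B·√T + 2·C; in particular the cumulative consensus violation is O(√T). -/
/-!
The first-order convexity inequality for `L t` at `θ (t + 1)`, together with (R2), (R3) and
polarization, bounds `ρ / 2 * ‖θ (t + 1) - γ t‖ ^ 2` by `B` plus the decrease over the step of the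
potential `‖lam‖² / (2ρ) + ρ / 2 * ‖γ - θs‖² + η / 2 * ‖θ - θs‖²`. Summing over `t` telescopes the
potential, whose initial value is at most `(ρ + η) * C / 2` because `lam 1 = 0`; with
`ρ = η = √T` this gives the bound.
-/

open scoped InnerProductSpace

theorem ConvexOn.apply_sub_le_of_hasFDerivAt {E : Type*} [NormedAddCommGroup E]
    [NormedSpace ℝ E] {s : Set E} {f : E → ℝ} {f' : E →L[ℝ] ℝ} {x y : E} (hf : ConvexOn ℝ s f)
    (hx : x ∈ s) (hy : y ∈ s) (hf' : HasFDerivAt f f' x) : f' (y - x) ≤ f y - f x := by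
  let c : ℝ →ᵃ[ℝ] E := AffineMap.lineMap x y
  have hc0 : c 0 = x := AffineMap.lineMap_apply_zero x y
  have hc1 : c 1 = y := AffineMap.lineMap_apply_one x y
  have hc : HasDerivAt c (y - x) 0 := AffineMap.hasDerivAt_lineMap
  have hslope := (hf.comp_affineMap c).le_slope_of_hasDerivAt (x := 0) (y := 1)
    (by simpa [hc0]) (by simpa [hc1]) one_pos ((hc0 ▸ hf').comp_hasDerivAt 0 hc)
  simpa [slope_def_field, hc0, hc1] using hslope

theorem ConvexOn.inner_gradient_le_sub {H : Type*} [NormedAddCommGroup H]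
    [InnerProductSpace ℝ H] [CompleteSpace H] {s : Set H} {f : H → ℝ} {g x y : H}
    (hf : ConvexOn ℝ s f) (hx : x ∈ s) (hy : y ∈ s) (hg : HasGradientAt f g x) :
    ⟪g, y - x⟫_ℝ ≤ f y - f x := by
  simpa using hf.apply_sub_le_of_hasFDerivAt hx hy hg.hasFDerivAt

section Potential

variable {H : Type*} [NormedAddCommGroup H]

noncomputable def doklPotential (ρ η : ℝ) (θs lam γ θ : H) : ℝ :=
  ‖lam‖ ^ 2 / (2 * ρ) + ρ / 2 * ‖γ - θs‖ ^ 2 + η / 2 * ‖θ - θs‖ ^ 2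

theorem doklPotential_nonneg {ρ η : ℝ} (hρ : 0 < ρ) (hη : 0 ≤ η) (θs lam γ θ : H) :
    0 ≤ doklPotential ρ η θs lam γ θ := by
  unfold doklPotential
  positivity

variable [InnerProductSpace ℝ H]

theorem two_mul_real_inner_sub_sub (a b c d : H) :
    2 * ⟪a - b, c - d⟫_ℝ = ‖c - b‖ ^ 2 + ‖a - d‖ ^ 2 - ‖c - a‖ ^ 2 - ‖b - d‖ ^ 2 := by
  simp only [norm_sub_sq_real, inner_sub_left, inner_sub_right, real_inner_comm a c,
    real_inner_comm b c]
  ring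

theorem real_inner_eq_of_eq_add_smul {ρ : ℝ} (hρ : ρ ≠ 0) {u v w : H} (h : w = u + ρ • v) :
    ⟪w, v⟫_ℝ = (‖w‖ ^ 2 - ‖u‖ ^ 2) / (2 * ρ) + ρ / 2 * ‖v‖ ^ 2 := by
  rw [eq_sub_of_add_eq h.symm, norm_sub_sq_real, norm_smul, inner_smul_right, Real.norm_eq_abs,
    mul_pow, sq_abs]
  field_simp
  ring

variable [CompleteSpace H]

theorem dokl_step_le {f : H → ℝ} {ρ η : ℝ} (hρ : 0 < ρ) (hη : 0 ≤ η)
    {θ₀ θ₁ γ₀ γ₁ lam₀ lam₁ θs : H} (hf : ConvexOn ℝ Set.univ f)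
    (hgrad : HasGradientAt f (-lam₁ - ρ • (γ₁ - γ₀) - η • (θ₁ - θ₀)) θ₁)
    (hlam : lam₁ = lam₀ + ρ • (θ₁ - γ₁)) (hproj : ⟪lam₁, θs - γ₁⟫_ℝ ≤ 0) :
    ρ / 2 * ‖θ₁ - γ₀‖ ^ 2 ≤
      f θs - f θ₁ + doklPotential ρ η θs lam₀ γ₀ θ₀ - doklPotential ρ η θs lam₁ γ₁ θ₁ := by
  have hsubgrad : ⟪lam₁, θ₁ - θs⟫_ℝ + ρ * ⟪γ₁ - γ₀, θ₁ - θs⟫_ℝ + η * ⟪θ₁ - θ₀, θ₁ - θs⟫_ℝ ≤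
      f θs - f θ₁ := by
    have := hf.inner_gradient_le_sub (Set.mem_univ _) (Set.mem_univ θs) hgrad
    rw [← neg_sub θ₁ θs, inner_neg_right, inner_sub_left, inner_sub_left, inner_neg_left,
      real_inner_smul_left, real_inner_smul_left] at this
    linarith
  have hsplit : ⟪lam₁, θ₁ - θs⟫_ℝ = ⟪lam₁, θ₁ - γ₁⟫_ℝ + ⟪lam₁, γ₁ - θs⟫_ℝ := by
    rw [← inner_add_right, sub_add_sub_cancel]
  have hproj' : 0 ≤ ⟪lam₁, γ₁ - θs⟫_ℝ := by
    rw [← neg_sub, inner_neg_right] at hproj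
    linarith
  have hγ : ⟪γ₁ - γ₀, θ₁ - θs⟫_ℝ =
      (‖θ₁ - γ₀‖ ^ 2 + ‖γ₁ - θs‖ ^ 2 - ‖θ₁ - γ₁‖ ^ 2 - ‖γ₀ - θs‖ ^ 2) / 2 := by
    linarith [two_mul_real_inner_sub_sub γ₁ γ₀ θ₁ θs]
  have hθ : ⟪θ₁ - θ₀, θ₁ - θs⟫_ℝ = (‖θ₁ - θ₀‖ ^ 2 + ‖θ₁ - θs‖ ^ 2 - ‖θ₀ - θs‖ ^ 2) / 2 := by
    have := two_mul_real_inner_sub_sub θ₁ θ₀ θ₁ θs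
    rw [sub_self, norm_zero] at this
    linarith
  rw [hsplit, real_inner_eq_of_eq_add_smul hρ.ne' hlam, hγ, hθ] at hsubgrad
  unfold doklPotential
  linear_combination hsubgrad + hproj' + mul_nonneg hη (sq_nonneg ‖θ₁ - θ₀‖) / 2

theorem dokl_consensus_violation_le {T : ℕ} {B C ρ η : ℝ} (hρ : 0 < ρ) (hη : 0 ≤ η)
    {L : ℕ → H → ℝ} {θ γ lam : ℕ → H} {θs : H}
    (hconv : ∀ t ∈ Finset.Icc 1 T, ConvexOn ℝ Set.univ (L t))
    (hgrad : ∀ t ∈ Finset.Icc 1 T,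
      HasGradientAt (L t)
        (-(lam (t + 1)) - ρ • (γ (t + 1) - γ t) - η • (θ (t + 1) - θ t)) (θ (t + 1)))
    (hR2 : ∀ t ∈ Finset.Icc 1 T, lam (t + 1) = lam t + ρ • (θ (t + 1) - γ (t + 1)))
    (hR3 : ∀ t ∈ Finset.Icc 1 T, ⟪lam (t + 1), θs - γ (t + 1)⟫_ℝ ≤ 0)
    (hB : ∀ t ∈ Finset.Icc 1 T, L t (θ (t + 1)) - L t θs ≥ -B)
    (hlam1 : lam 1 = 0) (hγ1 : ‖γ 1 - θs‖ ^ 2 ≤ C) (hθ1 : ‖θ 1 - θs‖ ^ 2 ≤ C) :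
    ρ * ∑ t ∈ Finset.Icc 1 T, ‖θ (t + 1) - γ t‖ ^ 2 ≤ 2 * T * B + (ρ + η) * C := by
  set Φ : ℕ → ℝ := fun t => doklPotential ρ η θs (lam t) (γ t) (θ t) with hΦ
  have hstep : ∀ t ∈ Finset.Icc 1 T,
      ρ / 2 * ‖θ (t + 1) - γ t‖ ^ 2 ≤ B + (Φ t - Φ (t + 1)) := fun t ht => by
    linarith [dokl_step_le hρ hη (hconv t ht) (hgrad t ht) (hR2 t ht) (hR3 t ht), hB t ht]
  have htelescope : ∑ t ∈ Finset.Icc 1 T, (Φ t - Φ (t + 1)) = Φ 1 - Φ (T + 1) := by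
    rw [← Finset.Ico_add_one_right_eq_Icc, ← neg_sub, ← Finset.sum_Ico_sub Φ (by omega),
      ← Finset.sum_neg_distrib]
    simp only [neg_sub]
  have hΦ1 : Φ 1 ≤ (ρ + η) / 2 * C := by
    simp only [hΦ, doklPotential, hlam1, norm_zero, zero_pow two_ne_zero, zero_div, zero_add]
    linarith [mul_le_mul_of_nonneg_left hγ1 hρ.le, mul_le_mul_of_nonneg_left hθ1 hη]
  have hsum := Finset.sum_le_sum hstep
  rw [← Finset.mul_sum, Finset.sum_add_distrib, htelescope, Finset.sum_const, Nat.card_Icc,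
    nsmul_eq_mul, add_tsub_cancel_right] at hsum
  linarith [doklPotential_nonneg hρ hη θs (lam (T + 1)) (γ (T + 1)) (θ (T + 1))]

end Potential

theorem domkl_thm1_consensus_sqrtT_general
    {H : Type*} [NormedAddCommGroup H] [InnerProductSpace ℝ H] [CompleteSpace H]
    (T : ℕ) (hT : 1 ≤ T)
    (C B : ℝ)
    (ρ η : ℝ) (hρ : ρ = Real.sqrt T) (hη : η = Real.sqrt T)
    (L : ℕ → H → ℝ) (θ γ' lam : ℕ → H) (θs : H)
    (hconv : ∀ t ∈ Finset.Icc 1 T, ConvexOn ℝ Set.univ (L t))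
    (hgradt1 : ∀ t ∈ Finset.Icc 1 T,
      HasGradientAt (L t)
        (-(lam (t + 1)) - ρ • (γ' (t + 1) - γ' t) - η • (θ (t + 1) - θ t)) (θ (t + 1)))
    (hR2 : ∀ t ∈ Finset.Icc 1 T, lam (t + 1) = lam t + ρ • (θ (t + 1) - γ' (t + 1)))
    (hR3 : ∀ t ∈ Finset.Icc 1 T, ⟪lam (t + 1), θs - γ' (t + 1)⟫_ℝ ≤ 0)
    (hBlow : ∀ t ∈ Finset.Icc 1 T, L t (θ (t + 1)) - L t θs ≥ -B)
    (hlam1 : lam 1 = 0)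
    (hγ1 : ‖γ' 1 - θs‖ ^ 2 ≤ C)
    (hθ1 : ‖θ 1 - θs‖ ^ 2 ≤ C) :
    ∑ t ∈ Finset.Icc 1 T, ‖θ (t + 1) - γ' t‖ ^ 2 ≤
      2 * B * Real.sqrt T + 2 * C := by
  subst hρ hη
  have hsqrt : 0 < Real.sqrt T := Real.sqrt_pos.2 (by exact_mod_cast hT)
  have hbound := dokl_consensus_violation_le hsqrt hsqrt.le hconv hgradt1 hR2 hR3 hBlow hlam1
    hγ1 hθ1
  have hTsq : Real.sqrt T * Real.sqrt T = T := Real.mul_self_sqrt (Nat.cast_nonneg T)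
  refine le_of_mul_le_mul_left ?_ hsqrt
  linear_combination hbound - 2 * B * hTsq

/-- Theorem 1 of the paper, consensus-violation part, with parameter choice ρ = η = √T. -/
theorem domkl_thm1_consensus_sqrtT
    {H : Type*} [NormedAddCommGroup H] [InnerProductSpace ℝ H] [CompleteSpace H]
    (T : ℕ) (hT : 1 ≤ T)
    (C B : ℝ) (hC : 0 ≤ C) (hB : 0 ≤ B)
    (ρ η : ℝ) (hρ : ρ = Real.sqrt T) (hη : η = Real.sqrt T)
    (L : ℕ → H → ℝ) (θ γ' lam : ℕ → H) (θs : H)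
    (hconv : ∀ t ∈ Finset.Icc 1 T, ConvexOn ℝ Set.univ (L t))
    (hgradt1 : ∀ t ∈ Finset.Icc 1 T,
      HasGradientAt (L t)
        (-(lam (t + 1)) - ρ • (γ' (t + 1) - γ' t) - η • (θ (t + 1) - θ t)) (θ (t + 1)))
    (hR2 : ∀ t ∈ Finset.Icc 1 T, lam (t + 1) = lam t + ρ • (θ (t + 1) - γ' (t + 1)))
    (hR3 : ∀ t ∈ Finset.Icc 1 T, ⟪lam (t + 1), θs - γ' (t + 1)⟫_ℝ ≤ 0)
    (hBlow : ∀ t ∈ Finset.Icc 1 T, L t (θ (t + 1)) - L t θs ≥ -B)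
    (hlam1 : lam 1 = 0)
    (hγ1 : ‖γ' 1 - θs‖ ^ 2 ≤ C)
    (hθ1 : ‖θ 1 - θs‖ ^ 2 ≤ C) :
    ∑ t ∈ Finset.Icc 1 T, ‖θ (t + 1) - γ' t‖ ^ 2 ≤
      2 * B * Real.sqrt T + 2 * C :=
  domkl_thm1_consensus_sqrtT_general T hT C B ρ η hρ hη L θ γ' lam θs hconv hgradt1 hR2 hR3 hBlow
    hlam1 hγ1 hθ1
end
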